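/- arXiv:2407.20422 — 2 statements merged into one kernel-verified Lean document; each statement's English description precedes it below -/
import Mathlib

section
/- The prefix function satisfies the triangle inequality: for strings u, v, w where no string is a substring of another, |pref(u,v)| + |pref(v,w)| ≥ |pref(u,w)|, where pref(s,t) = x is the non-empty string such that s = xy with y = ov(s,t). -/
/-- The length of the overlap of `s` and `t`: the longest `y` such that
`s = x ++ y` and `t = y ++ z` with `x, z` non-empty. -/
def ovLen {α : Type*} [DecidableEq α] (s t : List α) : ℕ :=
  Nat.findGreatest
    (fun k => k < s.length ∧ k < t.length ∧ s.drop (s.length - k) = t.take k)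
    (min s.length t.length)

/-- The overlap of `s` and `t`. -/
def ov {α : Type*} [DecidableEq α] (s t : List α) : List α :=
  t.take (ovLen s t)

/-- The prefix part of `s` with respect to `t`: `s = pre s t ++ ov s t`. -/
def pre {α : Type*} [DecidableEq α] (s t : List α) : List α :=
  s.take (s.length - ovLen s t)

/-- The suffix part of `t` with respect to `s`: `t = ov s t ++ suf s t`. -/
def suf {α : Type*} [DecidableEq α] (s t : List α) : List α :=
  t.drop (ovLen s t)

lemma ovLen_spec {α : Type*} [DecidableEq α] {s t : List α} (hs : s ≠ []) (ht : t ≠ []) :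
    ovLen s t < s.length ∧ ovLen s t < t.length ∧
      s.drop (s.length - ovLen s t) = t.take (ovLen s t) := by
  have h0 : 0 < s.length ∧ 0 < t.length ∧ s.drop (s.length - 0) = t.take 0 := by
    refine ⟨List.length_pos_iff.mpr hs, List.length_pos_iff.mpr ht, by simp⟩
  exact Nat.findGreatest_spec (P := fun k => k < s.length ∧ k < t.length ∧
    s.drop (s.length - k) = t.take k) (Nat.zero_le _) h0

/-- Triangle inequality for the prefix function. -/
theorem stmt_1 {α : Type*} [DecidableEq α] (u v w : List α)
    (hne : ∀ x ∈ [u, v, w], x ≠ ([] : List α))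
    (hnosub : ∀ x ∈ [u, v, w], ∀ y ∈ [u, v, w], x ≠ y → ¬ x <:+: y) :
    (pre u v).length + (pre v w).length ≥ (pre u w).length := by
  have hu := hne u (by simp)
  have hv := hne v (by simp)
  have hw := hne w (by simp)
  obtain ⟨ha1, ha2, ha3⟩ := ovLen_spec hu hv
  obtain ⟨hb1, hb2, hb3⟩ := ovLen_spec hv hw
  have hc : ovLen u v + ovLen v w ≤ v.length + ovLen u w := by
    by_cases h : ovLen u v + ovLen v w ≤ v.length
    · omega
    · have hk1 : ovLen u v + ovLen v w - v.length ≤ ovLen u v := by omega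
      have hk2 : ovLen u v + ovLen v w - v.length ≤ ovLen v w := by omega
      have key : u.drop (u.length - (ovLen u v + ovLen v w - v.length)) =
          w.take (ovLen u v + ovLen v w - v.length) := by
        have e1 : u.length - (ovLen u v + ovLen v w - v.length) =
            (u.length - ovLen u v) + (ovLen u v - (ovLen u v + ovLen v w - v.length)) := by
          omega
        rw [e1, ← List.drop_drop, ha3, List.drop_take]
        have e2 : ovLen u v - (ovLen u v + ovLen v w - v.length) = v.length - ovLen v w := by
          omega
        have e3 : ovLen u v - (ovLen u v - (ovLen u v + ovLen v w - v.length)) =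
            ovLen u v + ovLen v w - v.length := by omega
        rw [e3, e2, hb3, List.take_take, Nat.min_eq_left hk2]
      have : ovLen u v + ovLen v w - v.length ≤ ovLen u w :=
        Nat.le_findGreatest (le_min (by omega) (by omega)) ⟨by omega, by omega, key⟩
      omega
  have hlu : (pre u v).length = u.length - ovLen u v := by simp [pre]
  have hlv : (pre v w).length = v.length - ovLen v w := by simp [pre]
  have hlw : (pre u w).length = u.length - ovLen u w := by simp [pre]
  omega
end

section
/- Let C_1 and C_2 be two distinct cycles in a shortest cycle cover of the overlap graph, with c_1 ∈ C_1 and c_2 ∈ C_2. Then for any symbol p, |ov(c_1, c_2)|_p ≤ |C_1|_p + |C_2|_p. -/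
/-!
Concatenating the prefixes `pref(x, σ x)` around the cycle `C` of `c` gives a word `U` of length
`|C|` whose powers contain every string of `C`; so `c₁` occurs in the `|C₁|`-periodic word `U₁U₁⋯`,
`c₂` is a prefix of `U₂U₂⋯`, and `ov(c₁, c₂)` is a factor of both.

If `|ov(c₁, c₂)| ≥ |C₁| + |C₂|`, the two periodic words agree, up to a shift, on a stretch of
length `|C₁| + |C₂|`, hence everywhere (a weak Fine–Wilf theorem), and every string of `C₁ ∪ C₂`
occurs in `U₁U₁⋯`. Visiting these strings in the order of their positions modulo `|C₁|` is a single
cycle of weight at most `|C₁| < |C₁| + |C₂|`, contradicting minimality of the cover.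

So `|ov(c₁, c₂)| < |C₁| + |C₂|`. Splitting the overlap after `|C₁|` letters, each piece is a factor
of a periodic word no longer than the period, and such a factor contains each letter at most as
often as one period does.
-/

open Finset Function

section Superstring

variable {α : Type*}

section Overlap

variable [DecidableEq α]

theorem le_ovLen {s t : List α} {k : ℕ} (hs : k < s.length) (ht : k < t.length)
    (h : s.drop (s.length - k) = t.take k) : k ≤ ovLen s t :=
  Nat.le_findGreatest (le_min hs.le ht.le) ⟨hs, ht, h⟩

theorem ovLen_lt_length_left {s : List α} (t : List α) (hs : s ≠ []) :
    ovLen s t < s.length := by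
  rcases Nat.eq_zero_or_pos (ovLen s t) with h | h
  · rw [h]; exact List.length_pos_iff.2 hs
  · exact (Nat.findGreatest_of_ne_zero rfl h.ne').1

theorem drop_eq_ov (s t : List α) : s.drop (s.length - ovLen s t) = ov s t := by
  rcases Nat.eq_zero_or_pos (ovLen s t) with h | h
  · simp [ov, h]
  · exact (Nat.findGreatest_of_ne_zero rfl h.ne').2.2

theorem pre_append_ov (s t : List α) : pre s t ++ ov s t = s := by
  rw [pre, ← drop_eq_ov, List.take_append_drop]

theorem ov_prefix (s t : List α) : ov s t <+: t :=
  List.take_prefix _ _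

theorem length_pre (s t : List α) : (pre s t).length = s.length - ovLen s t := by
  rw [pre, List.length_take]
  exact min_eq_left (Nat.sub_le _ _)

theorem pre_ne_nil {s : List α} (t : List α) (hs : s ≠ []) : pre s t ≠ [] := by
  rw [← List.length_pos_iff, length_pre]
  have := ovLen_lt_length_left t hs
  omega

end Overlap

section Window

/-- `window f q s.length = s` says that `s` occurs in the infinite word `f` at position `q`. -/
def window (f : ℕ → α) (q n : ℕ) : List α :=
  (List.range' q n).map f

variable {f g : ℕ → α} {q q' m n w : ℕ}

@[simp]
theorem length_window : (window f q n).length = n := by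
  simp [window]

theorem window_eq_window_iff :
    window f q n = window g q' n ↔ ∀ i < n, f (q + i) = g (q' + i) := by
  simp [window, List.ext_getElem_iff]

theorem window_add : window f q (m + n) = window f q m ++ window f (q + m) n := by
  rw [window, ← List.range'_append, List.map_append, one_mul]
  rfl

theorem drop_window : (window f q n).drop m = window f (q + m) (n - m) := by
  rw [window, ← List.map_drop, List.drop_range']
  simp [window]

theorem take_window (h : m ≤ n) : (window f q n).take m = window f q m := by
  rw [← Nat.add_sub_cancel' h, window_add, List.take_left' length_window]

theorem window_prefix_window (h : m ≤ n) : window f q m <+: window f q n := by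
  rw [← take_window h]
  exact List.take_prefix _ _

theorem eq_window_of_prefix {s : List α} (h : s <+: window f q n) :
    s = window f q s.length := by
  rw [List.prefix_iff_eq_take.1 h, take_window (by simpa using h.length_le)]
  simp

theorem window_length_of_prefix {s t : List α} (hs : window f q s.length = s) (ht : t <+: s) :
    window f q t.length = t := by
  rw [← hs] at ht
  exact (eq_window_of_prefix ht).symm

theorem window_length_drop {s : List α} (hs : window f q s.length = s) :
    window f (q + m) (s.drop m).length = s.drop m := by
  rw [List.length_drop, ← drop_window, hs]

theorem prefix_of_window_eq {s t : List α} (hs : window f q s.length = s)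
    (ht : window f q t.length = t) (h : s.length ≤ t.length) : s <+: t := by
  rw [← hs, ← ht]
  exact window_prefix_window h

theorem Function.Periodic.window_add_period (hf : Periodic f w) :
    window f (q + w) n = window f q n :=
  window_eq_window_iff.2 fun i _ => by rw [add_right_comm, hf]

theorem Function.Periodic.window_mod (hf : Periodic f w) : window f (q % w) n = window f q n :=
  window_eq_window_iff.2 fun i _ => by
    rw [← hf.map_mod_nat, Nat.mod_add_mod, hf.map_mod_nat]

theorem Function.Periodic.window_perm (hf : Periodic f w) :
    (window f q w).Perm (window f 0 w) := by
  induction q with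
  | zero => rfl
  | succ q ih =>
    have h : window f q (1 + w) = window f q (w + 1) := by rw [add_comm]
    rw [window_add, window_add, hf.window_add_period] at h
    have hrot : (window f (q + 1) w ++ window f q 1).Perm (window f q w ++ window f q 1) :=
      h ▸ List.perm_append_comm
    exact ((List.perm_append_right_iff _).1 hrot).trans ih

end Window

section Occurrence

variable {f : ℕ → α} {w : ℕ}

theorem Function.Periodic.count_le_count_window [DecidableEq α] (hf : Periodic f w) {s : List α}
    {q : ℕ} (hs : window f q s.length = s) (hlen : s.length ≤ w) (p : α) :
    s.count p ≤ (window f 0 w).count p := by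
  rw [← hs, ← hf.window_perm.count_eq]
  exact ((window_prefix_window hlen).sublist).count_le p

theorem count_le_count_window_add_count_window [DecidableEq α] {f₁ f₂ : ℕ → α} {w₁ w₂ : ℕ}
    (hf₁ : Periodic f₁ w₁) (hf₂ : Periodic f₂ w₂) {s : List α} {q₁ q₂ : ℕ}
    (h₁ : window f₁ q₁ s.length = s) (h₂ : window f₂ q₂ s.length = s)
    (hlen : s.length ≤ w₁ + w₂) (p : α) :
    s.count p ≤ (window f₁ 0 w₁).count p + (window f₂ 0 w₂).count p := by
  rw [← List.take_append_drop w₁ s, List.count_append]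
  gcongr
  · exact hf₁.count_le_count_window (window_length_of_prefix h₁ (List.take_prefix _ _)) (by simp) p
  · exact hf₂.count_le_count_window (window_length_drop h₂) (by rw [List.length_drop]; omega) p

/-- If `s` reaches beyond `e'`, its part from `e'` on is an overlap of `s` with `t`. -/
theorem length_pre_add_le_of_window [DecidableEq α] {s t : List α} {e e' : ℕ} (hlt : e < e')
    (hs : window f e s.length = s) (ht : window f e' t.length = t) (hts : ¬ t <:+: s) :
    (pre s t).length + e ≤ e' := by
  rw [length_pre]
  by_cases hshort : s.length ≤ e' - e
  · omega
  set k := s.length - (e' - e)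
  have hdrop : s.drop (e' - e) = window f e' k := by
    rw [← hs, drop_window, Nat.add_sub_cancel' hlt.le]
  have hk : k < t.length := by
    by_contra! hk
    refine hts ((List.IsPrefix.isInfix ?_).trans (List.drop_suffix (e' - e) s).isInfix)
    rw [hdrop, ← ht]
    exact window_prefix_window hk
  have hov : k ≤ ovLen s t := by
    refine le_ovLen (by omega) hk ?_
    rw [show s.length - k = e' - e by omega, hdrop, ← ht, take_window hk.le]
  omega

/-- A weak form of the Fine–Wilf theorem. -/
theorem Function.Periodic.eq_of_eqOn_lt_add {f g : ℕ → α} {a b : ℕ} (ha : 0 < a) (hb : 0 < b)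
    (hf : Periodic f a) (hg : Periodic g b) (h : ∀ n < a + b, f n = g n) : f = g := by
  funext n
  induction n using Nat.strong_induction_on with
  | _ n ih =>
    by_cases hn : n < a + b
    · exact h n hn
    calc f n = f (n - a) := by rw [← hf (n - a), Nat.sub_add_cancel (by omega)]
      _ = g (n - a) := ih _ (by omega)
      _ = g (n - a - b) := by rw [← hg (n - a - b), Nat.sub_add_cancel (by omega)]
      _ = f (n - a - b) := (ih _ (by omega)).symm
      _ = f (n - b) := by rw [← hf (n - a - b), show n - a - b + a = n - b by omega]
      _ = g (n - b) := ih _ (by omega)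
      _ = g n := by rw [← hg (n - b), Nat.sub_add_cancel (by omega)]

end Occurrence

/-- The letter `d` is read only when `U = []`. -/
def periodicWord (U : List α) (d : α) (n : ℕ) : α :=
  U.getD (n % U.length) d

theorem periodic_periodicWord (U : List α) (d : α) : Periodic (periodicWord U d) U.length :=
  fun n => by simp [periodicWord]

theorem window_periodicWord (U : List α) (d : α) : window (periodicWord U d) 0 U.length = U := by
  refine List.ext_getElem (by simp) fun i hi _ => ?_
  rw [length_window] at hi
  simp [window, periodicWord, Nat.mod_eq_of_lt hi, hi]

theorem prefix_flatten_append_of_prefix_append {x b : ℕ → List α}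
    (h : ∀ i, x i <+: b i ++ x (i + 1)) (i N : ℕ) :
    x i <+: ((List.range N).map fun j => b (i + j)).flatten ++ x (i + N) := by
  induction N with
  | zero => simp
  | succ N ih =>
    refine ih.trans ?_
    simpa [List.range_succ, ← add_assoc] using
      (List.prefix_append_right_inj ((List.range N).map fun j => b (i + j)).flatten).2 (h (i + N))

theorem prefix_flatten_of_prefix_append {x b : ℕ → List α}
    (h : ∀ i, x i <+: b i ++ x (i + 1)) (hb : ∀ i, b i ≠ []) (i : ℕ) :
    x i <+: ((List.range (x i).length).map fun j => b (i + j)).flatten := by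
  refine List.prefix_of_prefix_length_le (prefix_flatten_append_of_prefix_append h i _)
    (List.prefix_append _ _) ?_
  rw [List.length_flatten, List.map_map]
  refine (List.length_le_sum_of_one_le _ ?_).trans' (by simp)
  simpa [Nat.one_le_iff_ne_zero] using fun j _ => hb (i + j)

theorem List.sum_map_range {M : Type*} [AddCommMonoid M] (g : ℕ → M) (n : ℕ) :
    ((List.range n).map g).sum = ∑ i ∈ Finset.range n, g i := by
  rw [Finset.sum, Finset.range_val, Multiset.range, Multiset.map_coe, Multiset.sum_coe]

section Orbit

variable {ι : Type*} (σ : Equiv.Perm ι) (c : ι)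

theorem Equiv.Perm.pow_mod_minimalPeriod_apply (n : ℕ) :
    (σ ^ (n % minimalPeriod σ c)) c = (σ ^ n) c := by
  rw [← Equiv.Perm.iterate_eq_pow, ← Equiv.Perm.iterate_eq_pow, iterate_mod_minimalPeriod_eq]

theorem Equiv.Perm.minimalPeriod_pos [Finite ι] : 0 < minimalPeriod σ c := by
  refine IsPeriodicPt.minimalPeriod_pos (orderOf_pos σ) ?_
  rw [IsPeriodicPt, IsFixedPt, Equiv.Perm.iterate_eq_pow, pow_orderOf_eq_one, Equiv.Perm.one_apply]

theorem Equiv.Perm.sum_range_minimalPeriod [Fintype ι] [DecidableRel σ.SameCycle] {M : Type*}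
    [AddCommMonoid M] (g : ι → M) :
    ∑ i ∈ range (minimalPeriod σ c), g ((σ ^ i) c) =
      ∑ x ∈ univ.filter (fun x => σ.SameCycle c x), g x := by
  refine Finset.sum_nbij (fun i => (σ ^ i) c)
    (fun i _ => Finset.mem_filter.2 ⟨mem_univ _, Equiv.Perm.sameCycle_pow_right.2 (.refl _ _)⟩)
    ?_ (fun y hy => ?_) fun _ _ => rfl
  · simpa [← Equiv.Perm.iterate_eq_pow] using iterate_injOn_Iio_minimalPeriod (f := σ) (x := c)
  · obtain ⟨i, -, rfl⟩ := (Finset.mem_filter.1 hy).2.exists_pow_eq'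
    exact ⟨i % minimalPeriod σ c, by simpa using Nat.mod_lt _ (σ.minimalPeriod_pos c),
      σ.pow_mod_minimalPeriod_apply c i⟩

end Orbit

section CycleWord

variable [DecidableEq α] {ι : Type*} (str : ι → List α) (σ : Equiv.Perm ι) (c : ι)

def orbitBlock (i : ℕ) : List α :=
  pre (str ((σ ^ i) c)) (str (σ ((σ ^ i) c)))

def orbitWord (m : ℕ) : List α :=
  ((List.range m).map (orbitBlock str σ c)).flatten

/-- The word `pref(c, σ c) pref(σ c, σ² c) ⋯` of the cycle `C` of `c`; its length is the
weight `|C|`. -/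
noncomputable def cycleWord : List α :=
  orbitWord str σ c (minimalPeriod σ c)

theorem orbitWord_add (m n : ℕ) :
    orbitWord str σ c (m + n) =
      orbitWord str σ c m ++ ((List.range n).map fun j => orbitBlock str σ c (m + j)).flatten := by
  simp [orbitWord, List.range_add, Function.comp_def]

theorem orbitBlock_add_mul_minimalPeriod (i L : ℕ) :
    orbitBlock str σ c (i + L * minimalPeriod σ c) = orbitBlock str σ c i := by
  simp only [orbitBlock]
  rw [← σ.pow_mod_minimalPeriod_apply c (i + _), Nat.add_mul_mod_self_right,
    σ.pow_mod_minimalPeriod_apply]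

theorem count_cycleWord [Fintype ι] [DecidableRel σ.SameCycle] (p : α) :
    (cycleWord str σ c).count p =
      ∑ x ∈ univ.filter (fun x => σ.SameCycle c x), (pre (str x) (str (σ x))).count p := by
  rw [cycleWord, orbitWord, List.count_flatten, List.map_map, List.sum_map_range,
    ← σ.sum_range_minimalPeriod c]
  rfl

theorem length_cycleWord [Fintype ι] [DecidableRel σ.SameCycle] :
    (cycleWord str σ c).length =
      ∑ x ∈ univ.filter (fun x => σ.SameCycle c x), (pre (str x) (str (σ x))).length := by
  rw [cycleWord, orbitWord, List.length_flatten, List.map_map, List.sum_map_range,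
    ← σ.sum_range_minimalPeriod c]
  rfl

variable {str} [Finite ι] (d : α)

theorem length_cycleWord_pos (hne : ∀ x, str x ≠ []) : 0 < (cycleWord str σ c).length := by
  obtain ⟨k, hk⟩ := Nat.exists_eq_add_of_lt (σ.minimalPeriod_pos c)
  rw [cycleWord, hk, zero_add, add_comm, orbitWord_add, List.length_append]
  have : orbitBlock str σ c 0 ≠ [] := pre_ne_nil _ (hne _)
  simp [orbitWord, List.length_pos_iff, this]

omit [Finite ι] in
theorem orbitWord_mul_minimalPeriod (L : ℕ) :
    orbitWord str σ c (L * minimalPeriod σ c) =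
      window (periodicWord (cycleWord str σ c) d) 0 (L * (cycleWord str σ c).length) := by
  induction L with
  | zero => simp [orbitWord, window]
  | succ L ih =>
    have hshift := ((periodic_periodicWord (cycleWord str σ c) d).nat_mul L).window_add_period
      (q := 0) (n := (cycleWord str σ c).length)
    rw [Nat.cast_id, zero_add, window_periodicWord] at hshift
    rw [add_one_mul, orbitWord_add, ih, add_one_mul, window_add, zero_add, hshift, cycleWord,
      orbitWord]
    congr 2
    exact List.map_congr_left fun j _ => by rw [add_comm, orbitBlock_add_mul_minimalPeriod]

theorem window_orbitWord (m : ℕ) :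
    window (periodicWord (cycleWord str σ c) d) 0 (orbitWord str σ c m).length =
      orbitWord str σ c m := by
  have hpre : orbitWord str σ c m <+: orbitWord str σ c (m * minimalPeriod σ c) := by
    obtain ⟨n, hn⟩ := Nat.exists_eq_add_of_le (Nat.le_mul_of_pos_right m (σ.minimalPeriod_pos c))
    rw [hn, orbitWord_add]
    exact List.prefix_append _ _
  rw [orbitWord_mul_minimalPeriod σ c d] at hpre
  exact (eq_window_of_prefix hpre).symm

theorem window_orbit (hne : ∀ x, str x ≠ []) (i : ℕ) :
    window (periodicWord (cycleWord str σ c) d) (orbitWord str σ c i).length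
      (str ((σ ^ i) c)).length = str ((σ ^ i) c) := by
  have hstep (j : ℕ) : str ((σ ^ j) c) <+: orbitBlock str σ c j ++ str ((σ ^ (j + 1)) c) := by
    rw [pow_succ', Equiv.Perm.mul_apply, orbitBlock]
    conv_lhs => rw [← pre_append_ov (str ((σ ^ j) c)) (str (σ ((σ ^ j) c)))]
    exact (List.prefix_append_right_inj _).2 (ov_prefix _ _)
  have hpre := prefix_flatten_of_prefix_append hstep (fun j => pre_ne_nil _ (hne _)) i
  rw [← List.drop_left (l₁ := orbitWord str σ c i) (l₂ := List.flatten _), ← orbitWord_add,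
    ← window_orbitWord σ c d (i + _), drop_window, zero_add] at hpre
  exact (eq_window_of_prefix hpre).symm

theorem exists_window_eq_of_sameCycle (hne : ∀ x, str x ≠ []) {y : ι} (hy : σ.SameCycle c y) :
    ∃ e, window (periodicWord (cycleWord str σ c) d) e (str y).length = str y := by
  obtain ⟨i, -, rfl⟩ := hy.exists_pow_eq'
  exact ⟨_, window_orbit σ c d hne i⟩

theorem window_zero_self (hne : ∀ x, str x ≠ []) :
    window (periodicWord (cycleWord str σ c) d) 0 (str c).length = str c := by
  simpa [orbitWord] using window_orbit σ c d hne 0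

theorem window_ov_left (hne : ∀ x, str x ≠ []) (c : ι) (t : List α) :
    window (periodicWord (cycleWord str σ c) d) ((str c).length - ovLen (str c) t)
      (ov (str c) t).length = ov (str c) t := by
  rw [← drop_eq_ov]
  simpa using
    window_length_drop (m := (str c).length - ovLen (str c) t) (window_zero_self σ c d hne)

theorem window_ov_right (hne : ∀ x, str x ≠ []) (s : List α) (c : ι) :
    window (periodicWord (cycleWord str σ c) d) 0 (ov s (str c)).length = ov s (str c) :=
  window_length_of_prefix (window_zero_self σ c d hne) (ov_prefix _ _)

theorem periodicWord_eq_shift_of_le_length_ov (hne : ∀ x, str x ≠ []) (c₁ c₂ : ι)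
    (hlong : (cycleWord str σ c₂).length + (cycleWord str σ c₁).length ≤
      (ov (str c₁) (str c₂)).length) :
    periodicWord (cycleWord str σ c₂) d = fun n =>
      periodicWord (cycleWord str σ c₁) d ((str c₁).length - ovLen (str c₁) (str c₂) + n) := by
  refine (periodic_periodicWord _ d).eq_of_eqOn_lt_add (length_cycleWord_pos σ c₂ hne)
    (length_cycleWord_pos σ c₁ hne) ((periodic_periodicWord _ d).const_add _) fun n hn => ?_
  have h := (window_ov_right σ d hne (str c₁) c₂).trans (window_ov_left σ d hne c₁ (str c₂)).symm
  simpa using window_eq_window_iff.1 h n (by omega)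

end CycleWord

theorem Fin.sum_add_le_of_add_le_succ {n : ℕ} (a : Fin n → ℕ) (Q : Fin (n + 1) → ℕ)
    (h : ∀ i, a i + Q i.castSucc ≤ Q i.succ) : ∑ i, a i + Q 0 ≤ Q (Fin.last n) := by
  induction n with
  | zero => simp
  | succ n ih =>
    have hinit := ih (fun i => a i.castSucc) (fun i => Q i.castSucc) fun i => by
      rw [← Fin.succ_castSucc]
      exact h i.castSucc
    have hlast : a (Fin.last n) + Q (Fin.last n).castSucc ≤ Q (Fin.last (n + 1)) := h (Fin.last n)
    rw [Fin.castSucc_zero] at hinit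
    rw [Fin.sum_univ_castSucc]
    omega

theorem Finset.exists_equiv_fin_strictMono {ι : Type*} {D : Finset ι} {o : ι → ℕ}
    (ho : Set.InjOn o D) {m : ℕ} (hm : D.card = m) :
    ∃ e : Fin m ≃ D, StrictMono fun i => o (e i) := by
  let : LinearOrder D := LinearOrder.lift' (fun x => o x) fun x y h => Subtype.ext (ho x.2 y.2 h)
  let e := Fintype.orderIsoFinOfCardEq D (by simpa using hm)
  exact ⟨e.toEquiv, e.strictMono⟩

section Merge

variable [DecidableEq α] {ι : Type*} {str : ι → List α}
  (hfree : ∀ x y, x ≠ y → ¬ str x <:+: str y) {f : ℕ → α} {w : ℕ}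
include hfree

theorem sum_length_pre_finRotate_le {n : ℕ} (hf : Periodic f w) {y : Fin (n + 2) → ι}
    (hy : Injective y) {P : Fin (n + 2) → ℕ} (hP : StrictMono P) (hPw : ∀ i, P i < w)
    (hocc : ∀ i, window f (P i) (str (y i)).length = str (y i)) :
    ∑ i, (pre (str (y i)) (str (y (finRotate _ i)))).length ≤ w := by
  have hfree' {i j : Fin (n + 2)} (hij : i ≠ j) : ¬ str (y j) <:+: str (y i) :=
    hfree _ _ (hy.ne hij.symm)
  -- the positions around the cycle, the first one again a period later
  let Q : Fin (n + 3) → ℕ := Fin.snoc (α := fun _ => ℕ) P (P 0 + w)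
  suffices h : ∀ i, (pre (str (y i)) (str (y (finRotate _ i)))).length + Q i.castSucc ≤ Q i.succ by
    simpa [Q, add_comm _ (P 0)] using Fin.sum_add_le_of_add_le_succ _ _ h
  intro i
  induction i using Fin.lastCases with
  | last =>
    simp only [Q, finRotate_last, Fin.snoc_castSucc, Fin.succ_last, Fin.snoc_last]
    refine length_pre_add_le_of_window (by linarith [hPw (Fin.last _)]) (hocc _) ?_
      (hfree' (Fin.last_pos).ne')
    rw [hf.window_add_period, hocc]
  | cast j =>
    simp only [Q, finRotate_apply, Fin.coeSucc_eq_succ, Fin.snoc_castSucc, Fin.succ_castSucc]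
    exact length_pre_add_le_of_window (hP Fin.castSucc_lt_succ) (hocc _) (hocc _)
      (hfree' Fin.castSucc_lt_succ.ne)

theorem exists_perm_sum_length_pre_le [DecidableEq ι] (hw : 0 < w) (hf : Periodic f w)
    (σ : Equiv.Perm ι) {D : Finset ι} (hD : ∀ x, σ x ∈ D ↔ x ∈ D) (hD2 : D.Nontrivial)
    (hocc : ∀ x ∈ D, ∃ e, window f e (str x).length = str x) :
    ∃ τ : Equiv.Perm ι, (∀ x ∉ D, τ x = σ x) ∧ ∑ x ∈ D, (pre (str x) (str (τ x))).length ≤ w := by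
  choose! e he using hocc
  have ho (x : ι) (hx : x ∈ D) : window f (e x % w) (str x).length = str x :=
    hf.window_mod.trans (he x hx)
  have hinj : Set.InjOn (fun x => e x % w) D := by
    intro x hx y hy hxy
    have hy' : window f (e x % w) (str y).length = str y := by
      rw [show e x % w = e y % w from hxy]
      exact ho y hy
    by_contra hxy'
    rcases le_total (str x).length (str y).length with h | h
    · exact hfree x y hxy' (prefix_of_window_eq (ho x hx) hy' h).isInfix
    · exact hfree y x (Ne.symm hxy') (prefix_of_window_eq hy' (ho x hx) h).isInfix
  obtain ⟨n, hn⟩ : ∃ n, D.card = n + 2 :=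
    ⟨D.card - 2, by have := Finset.one_lt_card_iff_nontrivial.2 hD2; omega⟩
  obtain ⟨y, hy⟩ := Finset.exists_equiv_fin_strictMono hinj hn
  let τ : Equiv.Perm ι := Equiv.Perm.subtypeCongr (y.permCongr (finRotate (n + 2)))
    (σ.subtypePerm fun x => not_congr (hD x))
  refine ⟨τ, fun x hx => Equiv.Perm.subtypeCongr.right_apply _ _ hx, ?_⟩
  have hτ (i : Fin (n + 2)) : τ (y i) = y (finRotate _ i) := by
    simp [τ, Equiv.Perm.subtypeCongr.left_apply _ _ (y i).2]
  rw [← Finset.sum_coe_sort, ← y.sum_comp]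
  simp only [hτ]
  exact sum_length_pre_finRotate_le hfree hf (Subtype.val_injective.comp y.injective) hy
    (fun i => Nat.mod_lt _ hw) fun i => ho _ (y i).2

end Merge

/-- The lemma of Blum, Jiang, Li, Tromp and Yannakakis (1991). -/
theorem length_ov_lt_length_cycleWord_add [DecidableEq α] {ι : Type*} [Fintype ι] [DecidableEq ι]
    {str : ι → List α} (hne : ∀ x, str x ≠ []) (hfree : ∀ x y, x ≠ y → ¬ str x <:+: str y)
    (σ : Equiv.Perm ι) [DecidableRel σ.SameCycle]
    (hshort : ∀ τ : Equiv.Perm ι,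
      ∑ x, (pre (str x) (str (σ x))).length ≤ ∑ x, (pre (str x) (str (τ x))).length)
    {c₁ c₂ : ι} (hdiff : ¬ σ.SameCycle c₁ c₂) :
    (ov (str c₁) (str c₂)).length <
      (cycleWord str σ c₁).length + (cycleWord str σ c₂).length := by
  obtain ⟨d, -⟩ := List.exists_mem_of_ne_nil _ (hne c₁)
  by_contra! hlong
  have hshift := periodicWord_eq_shift_of_le_length_ov σ d hne c₁ c₂ (by omega)
  set D := univ.filter (fun x => σ.SameCycle c₁ x) ∪ univ.filter (fun x => σ.SameCycle c₂ x)
  have hD (x : ι) : σ x ∈ D ↔ x ∈ D := by simp [D]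
  have hD2 : D.Nontrivial :=
    ⟨c₁, by simp [D, Equiv.Perm.SameCycle.refl], c₂, by simp [D, Equiv.Perm.SameCycle.refl],
      fun h => hdiff (h ▸ .refl _ _)⟩
  have hocc (x : ι) (hx : x ∈ D) :
      ∃ e, window (periodicWord (cycleWord str σ c₁) d) e (str x).length = str x := by
    rcases Finset.mem_union.1 hx with hx | hx
    · exact exists_window_eq_of_sameCycle σ c₁ d hne (Finset.mem_filter.1 hx).2
    · obtain ⟨e, he⟩ := exists_window_eq_of_sameCycle σ c₂ d hne (Finset.mem_filter.1 hx).2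
      refine ⟨(str c₁).length - ovLen (str c₁) (str c₂) + e,
        Eq.trans (window_eq_window_iff.2 fun i _ => ?_) he⟩
      rw [hshift, add_assoc]
  obtain ⟨τ, hτ, hsum⟩ := exists_perm_sum_length_pre_le hfree (length_cycleWord_pos σ c₁ hne)
    (periodic_periodicWord _ d) σ hD hD2 hocc
  have hσD : ∑ x ∈ D, (pre (str x) (str (σ x))).length =
      (cycleWord str σ c₁).length + (cycleWord str σ c₂).length := by
    rw [Finset.sum_union (Finset.disjoint_filter.2 fun x _ h₁ h₂ => hdiff (h₁.trans h₂.symm)),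
      length_cycleWord, length_cycleWord]
  have hcompl : ∑ x ∈ Dᶜ, (pre (str x) (str (τ x))).length =
      ∑ x ∈ Dᶜ, (pre (str x) (str (σ x))).length :=
    Finset.sum_congr rfl fun x hx => by rw [hτ x (Finset.mem_compl.1 hx)]
  have := hshort τ
  rw [← Finset.sum_add_sum_compl D, ← Finset.sum_add_sum_compl D, hσD, hcompl] at this
  have := length_cycleWord_pos σ c₂ hne
  omega

end Superstring

open Finset in
/-- A cycle cover of the complete digraph on `S` is a permutation `σ` of `S`; its total length
is `∑ x, |pref(x, σ x)|`, and the `p`-count of the cycle containing `c` is the sum of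
`|pref(x, σ x)|_p` over the orbit of `c`. -/
theorem stmt_7 {α : Type*} [DecidableEq α] (S : Finset (List α))
    (hne : ∀ x ∈ S, x ≠ ([] : List α))
    (hnosub : ∀ x ∈ S, ∀ y ∈ S, x ≠ y → ¬ x <:+: y)
    (σ : Equiv.Perm {x // x ∈ S})
    [DecidableRel σ.SameCycle]
    (hshort : ∀ τ : Equiv.Perm {x // x ∈ S},
      ∑ x : {x // x ∈ S}, (pre x.1 (σ x).1).length ≤
        ∑ x : {x // x ∈ S}, (pre x.1 (τ x).1).length)
    (c₁ c₂ : {x // x ∈ S}) (hdiff : ¬ σ.SameCycle c₁ c₂) (p : α) :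
    (ov c₁.1 c₂.1).count p ≤
      (∑ x ∈ univ.filter (fun x => σ.SameCycle c₁ x), (pre x.1 (σ x).1).count p) +
      (∑ x ∈ univ.filter (fun x => σ.SameCycle c₂ x), (pre x.1 (σ x).1).count p) := by
  have hne' (x : {x // x ∈ S}) : x.1 ≠ [] := hne x.1 x.2
  have hfree (x y : {x // x ∈ S}) (hxy : x ≠ y) : ¬ x.1 <:+: y.1 :=
    hnosub x.1 x.2 y.1 y.2 (Subtype.val_injective.ne hxy)
  obtain ⟨d, -⟩ := List.exists_mem_of_ne_nil _ (hne' c₁)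
  rw [← count_cycleWord, ← count_cycleWord, ← window_periodicWord (cycleWord _ σ c₁) d,
    ← window_periodicWord (cycleWord _ σ c₂) d]
  exact count_le_count_window_add_count_window (periodic_periodicWord _ d)
    (periodic_periodicWord _ d) (window_ov_left σ d hne' c₁ _) (window_ov_right σ d hne' _ c₂)
    (length_ov_lt_length_cycleWord_add hne' hfree σ hshort hdiff).le p
end
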